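/- arXiv:0903.2512 — 4 statements merged into one kernel-verified Lean document; each statement's English description precedes it below -/
import Mathlib

section
/- Matrix form of the relation Ξ₁ + Ξ₂ = W₁W₂: let A and B be N×N complex matrices and x ∈ ℂ such that x·I − A, x·I + B and C := A ⊗ I + I ⊗ B are all invertible. Then tr((x·I − A)⁻¹) · tr((x·I + B)⁻¹) = tr( C⁻¹ · ((x·I − A)⁻¹ ⊗ I) ) − tr( C⁻¹ · (I ⊗ (x·I + B)⁻¹) ). -/
open Matrix
open scoped Kronecker

/-- Matrix form of the relation `Ξ₁ + Ξ₂ = W₁ W₂`: if `x·I − A`, `x·I + B` and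
`C = A ⊗ I + I ⊗ B` are invertible, then
`tr((x·I − A)⁻¹) · tr((x·I + B)⁻¹)
  = tr( C⁻¹ ((x·I − A)⁻¹ ⊗ I) ) − tr( C⁻¹ (I ⊗ (x·I + B)⁻¹) )`. -/
theorem cauchy_model_rel_matrix_form (N : ℕ)
    (A B : Matrix (Fin N) (Fin N) ℂ) (x : ℂ)
    (hA : IsUnit (x • (1 : Matrix (Fin N) (Fin N) ℂ) - A))
    (hB : IsUnit (x • (1 : Matrix (Fin N) (Fin N) ℂ) + B))
    (hC : IsUnit (A ⊗ₖ (1 : Matrix (Fin N) (Fin N) ℂ) + (1 : Matrix (Fin N) (Fin N) ℂ) ⊗ₖ B)) :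
    ((x • (1 : Matrix (Fin N) (Fin N) ℂ) - A)⁻¹).trace *
        ((x • (1 : Matrix (Fin N) (Fin N) ℂ) + B)⁻¹).trace
      = ((A ⊗ₖ (1 : Matrix (Fin N) (Fin N) ℂ) + (1 : Matrix (Fin N) (Fin N) ℂ) ⊗ₖ B)⁻¹ *
            ((x • (1 : Matrix (Fin N) (Fin N) ℂ) - A)⁻¹ ⊗ₖ (1 : Matrix (Fin N) (Fin N) ℂ))).trace
        - ((A ⊗ₖ (1 : Matrix (Fin N) (Fin N) ℂ) + (1 : Matrix (Fin N) (Fin N) ℂ) ⊗ₖ B)⁻¹ *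
            ((1 : Matrix (Fin N) (Fin N) ℂ) ⊗ₖ (x • (1 : Matrix (Fin N) (Fin N) ℂ) + B)⁻¹)).trace := by
  set M1 := x • (1 : Matrix (Fin N) (Fin N) ℂ) - A with hM1
  set M2 := x • (1 : Matrix (Fin N) (Fin N) ℂ) + B with hM2
  set C := A ⊗ₖ (1 : Matrix (Fin N) (Fin N) ℂ) + (1 : Matrix (Fin N) (Fin N) ℂ) ⊗ₖ B with hCdef
  have hC' : C = (1 : Matrix (Fin N) (Fin N) ℂ) ⊗ₖ M2 - M1 ⊗ₖ (1 : Matrix (Fin N) (Fin N) ℂ) := by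
    ext ⟨i, j⟩ ⟨k, l⟩
    simp only [hCdef, hM1, hM2, Matrix.add_apply, Matrix.sub_apply, kronecker_apply,
      Matrix.smul_apply, Matrix.one_apply, smul_eq_mul]
    split_ifs <;> ring
  have h1 : M1⁻¹ * M1 = 1 := nonsing_inv_mul _ ((isUnit_iff_isUnit_det _).mp hA)
  have h2 : M2⁻¹ * M2 = 1 := nonsing_inv_mul _ ((isUnit_iff_isUnit_det _).mp hB)
  have h3 : C * C⁻¹ = 1 := mul_nonsing_inv _ ((isUnit_iff_isUnit_det _).mp hC)
  have key : (M1⁻¹ ⊗ₖ M2⁻¹) * C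
      = M1⁻¹ ⊗ₖ (1 : Matrix (Fin N) (Fin N) ℂ)
        - (1 : Matrix (Fin N) (Fin N) ℂ) ⊗ₖ M2⁻¹ := by
    rw [hC', mul_sub, ← mul_kronecker_mul, ← mul_kronecker_mul, h1, h2, mul_one, mul_one]
  calc M1⁻¹.trace * M2⁻¹.trace
      = (M1⁻¹ ⊗ₖ M2⁻¹).trace := (trace_kronecker _ _).symm
    _ = ((M1⁻¹ ⊗ₖ M2⁻¹) * (C * C⁻¹)).trace := by rw [h3, mul_one]
    _ = (C⁻¹ * ((M1⁻¹ ⊗ₖ M2⁻¹) * C)).trace := by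
        rw [← mul_assoc, trace_mul_comm]
    _ = (C⁻¹ * (M1⁻¹ ⊗ₖ (1 : Matrix (Fin N) (Fin N) ℂ))).trace
        - (C⁻¹ * ((1 : Matrix (Fin N) (Fin N) ℂ) ⊗ₖ M2⁻¹)).trace := by
        rw [key, mul_sub, trace_sub]
end

section
/- First Jacobian rule (eq. SandM, first rule): fix ξ ∈ ℂ and an N×N complex matrix A. For every N×N complex matrix M such that ξ·I − M is invertible, the map F(M) = (ξ·I − M)⁻¹ · A is differentiable at M and its divergence satisfies div F(M) = tr((ξ·I − M)⁻¹ A) · tr((ξ·I − M)⁻¹). -/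
/-!
With `R = (ξ • 1 - M)⁻¹`, the derivative of `X ↦ (ξ • 1 - X)⁻¹ * A` at `M` is `H ↦ R * H * (R * A)`.
Evaluated on `single i j 1`, its `(i, j)` entry is `R i i * (R * A) j j`, and summing over `i, j`
gives `trace R * trace (R * A)`.
-/

open Matrix

attribute [local instance] Matrix.normedAddCommGroup Matrix.normedSpace

/-- The divergence of a map `F` on `N×N` complex matrices at `M`:
`div F (M) = ∑_{i,j} (D F_{ij})(M)[E_{ij}]`, where `E_{ij}` is the elementary matrix. -/
noncomputable def matrixDivergence {N : ℕ}
    (F : Matrix (Fin N) (Fin N) ℂ → Matrix (Fin N) (Fin N) ℂ)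
    (M : Matrix (Fin N) (Fin N) ℂ) : ℂ :=
  ∑ i : Fin N, ∑ j : Fin N,
    fderiv ℂ (fun X => F X i j) M (Matrix.single i j (1 : ℂ))

namespace Matrix

section Trace

variable {n α : Type*} [Fintype n] [DecidableEq n]

theorem mul_single_one_mul_apply [NonAssocSemiring α] (P Q : Matrix n n α) (i j : n) :
    (P * single i j (1 : α) * Q) i j = P i i * Q j j := by
  rw [mul_apply, Finset.sum_eq_single j
    (fun k _ hk => by simp [mul_single_apply_of_ne _ _ _ _ _ hk]) (by simp)]
  simp

theorem sum_sum_mul_single_one_mul_apply [CommSemiring α] (P Q : Matrix n n α) :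
    ∑ i : n, ∑ j : n, (P * single i j (1 : α) * Q) i j = P.trace * Q.trace := by
  simp only [mul_single_one_mul_apply, trace, diag, Finset.sum_mul_sum]

end Trace

section Inverse

variable {𝕜 n : Type*} [NontriviallyNormedField 𝕜] [CompleteSpace 𝕜] [Fintype n] [DecidableEq n]

theorem hasFDerivAt_inv {Y : Matrix n n 𝕜} (hY : IsUnit Y) :
    HasFDerivAt (fun X : Matrix n n 𝕜 => X⁻¹)
      (-(LinearMap.mulLeftRight 𝕜 (Y⁻¹, Y⁻¹)).toContinuousLinearMap) Y := by
  -- `HasFDerivAt` only sees the topology, so we may compute with the submultiplicative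
  -- `L∞`-operator norm, whose topology is definitionally that of the entrywise sup norm
  -- (instance search does not see through this for completeness, hence `inferInstanceAs`).
  let _ : NormedRing (Matrix n n 𝕜) := Matrix.linftyOpNormedRing
  let _ : NormedAlgebra 𝕜 (Matrix n n 𝕜) := Matrix.linftyOpNormedAlgebra
  have _ : HasSummableGeomSeries (Matrix n n 𝕜) :=
    @instHasSummableGeomSeriesOfCompleteSpace _ _ (inferInstanceAs (CompleteSpace (Matrix n n 𝕜)))
  have h := hasFDerivAt_ringInverse (𝕜 := 𝕜) hY.unit
  rw [coe_units_inv, IsUnit.unit_spec] at h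
  rw [show (fun X : Matrix n n 𝕜 => X⁻¹) = Ring.inverse from funext nonsing_inv_eq_ringInverse]
  exact h

theorem hasFDerivAt_resolvent_mul (ξ : 𝕜) (A : Matrix n n 𝕜) {M : Matrix n n 𝕜}
    (hM : IsUnit (ξ • 1 - M)) :
    HasFDerivAt (fun X : Matrix n n 𝕜 => (ξ • 1 - X)⁻¹ * A)
      (LinearMap.mulLeftRight 𝕜 ((ξ • 1 - M)⁻¹, (ξ • 1 - M)⁻¹ * A)).toContinuousLinearMap M := by
  have h := (LinearMap.mulRight 𝕜 A).toContinuousLinearMap.hasFDerivAt.comp M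
    ((hasFDerivAt_inv hM).comp M ((hasFDerivAt_id M).const_sub (ξ • 1)))
  refine h.congr_fderiv (ContinuousLinearMap.ext fun H => ?_)
  change -((ξ • 1 - M)⁻¹ * -H * (ξ • 1 - M)⁻¹) * A = (ξ • 1 - M)⁻¹ * H * ((ξ • 1 - M)⁻¹ * A)
  simp only [Matrix.mul_neg, Matrix.neg_mul, neg_neg, Matrix.mul_assoc]

end Inverse

end Matrix

theorem HasFDerivAt.matrixDivergence_eq {N : ℕ}
    {F : Matrix (Fin N) (Fin N) ℂ → Matrix (Fin N) (Fin N) ℂ}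
    {F' : Matrix (Fin N) (Fin N) ℂ →L[ℂ] Matrix (Fin N) (Fin N) ℂ} {M : Matrix (Fin N) (Fin N) ℂ}
    (hF : HasFDerivAt F F' M) :
    matrixDivergence F M = ∑ i, ∑ j, F' (single i j 1) i j := by
  unfold matrixDivergence
  congr! 2 with i _ j _
  exact congrArg (· (single i j 1)) (hasFDerivAt_pi'.1 (hasFDerivAt_pi'.1 hF i) j).fderiv

theorem matrixDivergence_eq_trace_mul_trace {N : ℕ}
    {F : Matrix (Fin N) (Fin N) ℂ → Matrix (Fin N) (Fin N) ℂ} {P Q M : Matrix (Fin N) (Fin N) ℂ}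
    (hF : HasFDerivAt F (LinearMap.mulLeftRight ℂ (P, Q)).toContinuousLinearMap M) :
    matrixDivergence F M = P.trace * Q.trace := by
  rw [hF.matrixDivergence_eq, ← sum_sum_mul_single_one_mul_apply]
  rfl

/-- First Jacobian rule (eq. SandM, first rule): for `F(M) = (ξ·I − M)⁻¹ · A`, whenever
`ξ·I − M` is invertible, `F` is differentiable at `M` and
`div F (M) = tr((ξ·I − M)⁻¹ A) · tr((ξ·I − M)⁻¹)`. -/
theorem jacobian_rule_resolvent_times_const (N : ℕ) (ξ : ℂ)
    (A M : Matrix (Fin N) (Fin N) ℂ)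
    (hM : IsUnit (ξ • (1 : Matrix (Fin N) (Fin N) ℂ) - M)) :
    DifferentiableAt ℂ (fun X : Matrix (Fin N) (Fin N) ℂ =>
        (ξ • (1 : Matrix (Fin N) (Fin N) ℂ) - X)⁻¹ * A) M ∧
      matrixDivergence (fun X => (ξ • (1 : Matrix (Fin N) (Fin N) ℂ) - X)⁻¹ * A) M
        = ((ξ • (1 : Matrix (Fin N) (Fin N) ℂ) - M)⁻¹ * A).trace *
            ((ξ • (1 : Matrix (Fin N) (Fin N) ℂ) - M)⁻¹).trace := by
  have hF := hasFDerivAt_resolvent_mul ξ A hM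
  exact ⟨hF.differentiableAt, by rw [matrixDivergence_eq_trace_mul_trace hF, mul_comm]⟩
end

section
/- Second Jacobian rule (eq. SandM, second rule): fix ξ ∈ ℂ and N×N complex matrices A and B. For every N×N complex matrix M such that ξ·I − M is invertible, the map F(M) = tr((ξ·I − M)⁻¹ A) · B is differentiable at M and its divergence satisfies div F(M) = tr( (ξ·I − M)⁻¹ A (ξ·I − M)⁻¹ B ). -/
open Matrix

attribute [local instance] Matrix.normedAddCommGroup Matrix.normedSpace

/-! Since `d(X⁻¹) = -X⁻¹ dX X⁻¹`, the resolvent `R(X) = (ξ • 1 - X)⁻¹` has derivative `E ↦ R E R`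
at `M`. The `(i, j)` entry of `F(X) = tr (R(X) A) • B` therefore has derivative
`E ↦ B i j * tr (R E R A)`; at `E = single i j 1` this is `B i j * (R A R) j i`, and summing over
`i, j` gives `tr (R A R B)`. -/

/- Mathlib differentiates `Ring.inverse` in complete normed rings. The entrywise norm on matrices
is not submultiplicative, but the L∞ operator norm is, and it induces the same topology, which is
all that Fréchet derivatives depend on. -/
theorem Matrix.linftyOp_hasSummableGeomSeries {n α : Type*} [Fintype n] [DecidableEq n]
    [NormedRing α] [CompleteSpace α] :
    @HasSummableGeomSeries (Matrix n n α) Matrix.linftyOpNormedRing :=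
  @instHasSummableGeomSeriesOfCompleteSpace _ Matrix.linftyOpNormedRing
    (inferInstanceAs (CompleteSpace (n → n → α)))

section Resolvent

variable {𝕜 : Type*} [NontriviallyNormedField 𝕜] [CompleteSpace 𝕜] {n : Type*} [Fintype n]
  [DecidableEq n]

theorem Matrix.differentiableAt_inv {M : Matrix n n 𝕜} (hM : IsUnit M) :
    DifferentiableAt 𝕜 (fun X : Matrix n n 𝕜 => X⁻¹) M := by
  let _ : NormedRing (Matrix n n 𝕜) := Matrix.linftyOpNormedRing
  let _ : NormedAlgebra 𝕜 (Matrix n n 𝕜) := Matrix.linftyOpNormedAlgebra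
  have := Matrix.linftyOp_hasSummableGeomSeries (n := n) (α := 𝕜)
  simp only [Matrix.nonsing_inv_eq_ringInverse]
  exact differentiableAt_inverse hM

theorem Matrix.fderiv_inv_apply {M : Matrix n n 𝕜} (hM : IsUnit M) (E : Matrix n n 𝕜) :
    fderiv 𝕜 (fun X : Matrix n n 𝕜 => X⁻¹) M E = -(M⁻¹ * E * M⁻¹) := by
  obtain ⟨u, rfl⟩ := hM
  let _ : NormedRing (Matrix n n 𝕜) := Matrix.linftyOpNormedRing
  let _ : NormedAlgebra 𝕜 (Matrix n n 𝕜) := Matrix.linftyOpNormedAlgebra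
  have := Matrix.linftyOp_hasSummableGeomSeries (n := n) (α := 𝕜)
  simp only [Matrix.nonsing_inv_eq_ringInverse, Ring.inverse_unit]
  exact congrArg (· E) (fderiv_inverse (𝕜 := 𝕜) u)

variable {ξ : 𝕜} {M : Matrix n n 𝕜}

theorem Matrix.differentiableAt_resolvent (hM : IsUnit (ξ • (1 : Matrix n n 𝕜) - M)) :
    DifferentiableAt 𝕜 (fun X : Matrix n n 𝕜 => (ξ • (1 : Matrix n n 𝕜) - X)⁻¹) M :=
  (Matrix.differentiableAt_inv hM).comp M (by fun_prop)

theorem Matrix.fderiv_resolvent_apply (hM : IsUnit (ξ • (1 : Matrix n n 𝕜) - M))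
    (E : Matrix n n 𝕜) :
    fderiv 𝕜 (fun X : Matrix n n 𝕜 => (ξ • (1 : Matrix n n 𝕜) - X)⁻¹) M E =
      (ξ • (1 : Matrix n n 𝕜) - M)⁻¹ * E * (ξ • (1 : Matrix n n 𝕜) - M)⁻¹ := by
  have h : HasFDerivAt (fun X : Matrix n n 𝕜 => (ξ • (1 : Matrix n n 𝕜) - X)⁻¹)
      ((fderiv 𝕜 (fun X : Matrix n n 𝕜 => X⁻¹) (ξ • 1 - M)).comp (-ContinuousLinearMap.id 𝕜 _))
      M :=
    (Matrix.differentiableAt_inv hM).hasFDerivAt.comp M ((hasFDerivAt_id M).const_sub _)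
  simp [h.fderiv, Matrix.fderiv_inv_apply hM]

variable {m : Type*} [Fintype m] {g : Matrix m m 𝕜 → Matrix n n 𝕜} {x : Matrix m m 𝕜}

theorem Matrix.hasFDerivAt_trace_mul_const (hg : DifferentiableAt 𝕜 g x) (A : Matrix n n 𝕜) :
    HasFDerivAt (fun y => (g y * A).trace)
      (((Matrix.traceLinearMap n 𝕜 𝕜).comp (LinearMap.mulRight 𝕜 A)).toContinuousLinearMap.comp
        (fderiv 𝕜 g x)) x :=
  ((Matrix.traceLinearMap n 𝕜 𝕜).comp
    (LinearMap.mulRight 𝕜 A)).toContinuousLinearMap.hasFDerivAt.comp x hg.hasFDerivAt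

theorem Matrix.differentiableAt_trace_mul_const (hg : DifferentiableAt 𝕜 g x)
    (A : Matrix n n 𝕜) : DifferentiableAt 𝕜 (fun y => (g y * A).trace) x :=
  (Matrix.hasFDerivAt_trace_mul_const hg A).differentiableAt

theorem Matrix.fderiv_trace_mul_const_apply (hg : DifferentiableAt 𝕜 g x) (A : Matrix n n 𝕜)
    (v : Matrix m m 𝕜) :
    fderiv 𝕜 (fun y => (g y * A).trace) x v = (fderiv 𝕜 g x v * A).trace := by
  rw [(Matrix.hasFDerivAt_trace_mul_const hg A).fderiv]
  rfl

end Resolvent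

theorem Matrix.sum_mul_trace_mul_single_mul {R : Type*} [CommSemiring R] {n : Type*} [Fintype n]
    [DecidableEq n] (P Q B : Matrix n n R) :
    ∑ i, ∑ j, B i j * (P * Matrix.single i j 1 * Q).trace = (Q * P * B).trace := by
  have h : ∀ i j, (P * Matrix.single i j 1 * Q).trace = (Q * P) j i := by
    intro i j
    rw [Matrix.trace_mul_comm, ← Matrix.mul_assoc, Matrix.trace_mul_single]
    simp
  simp only [h]
  rw [Finset.sum_comm]
  simp [Matrix.trace, Matrix.mul_apply, mul_comm]

theorem matrixDivergence_smul_const {N : ℕ} {φ : Matrix (Fin N) (Fin N) ℂ → ℂ}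
    {M : Matrix (Fin N) (Fin N) ℂ} (hφ : DifferentiableAt ℂ φ M) (B : Matrix (Fin N) (Fin N) ℂ) :
    matrixDivergence (fun X => φ X • B) M =
      ∑ i, ∑ j, B i j * fderiv ℂ φ M (Matrix.single i j 1) := by
  refine Finset.sum_congr rfl fun i _ => Finset.sum_congr rfl fun j _ => ?_
  have h : fderiv ℂ (fun X => φ X * B i j) M = B i j • fderiv ℂ φ M := fderiv_mul_const hφ _
  simp only [Matrix.smul_apply, smul_eq_mul, h]
  rfl

/-- Second Jacobian rule (eq. SandM, second rule): for `F(M) = tr((ξ·I − M)⁻¹ A) · B`,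
whenever `ξ·I − M` is invertible, `F` is differentiable at `M` and
`div F (M) = tr( (ξ·I − M)⁻¹ A (ξ·I − M)⁻¹ B )`. -/
theorem jacobian_rule_trace_resolvent_times_const (N : ℕ) (ξ : ℂ)
    (A B M : Matrix (Fin N) (Fin N) ℂ)
    (hM : IsUnit (ξ • (1 : Matrix (Fin N) (Fin N) ℂ) - M)) :
    DifferentiableAt ℂ (fun X : Matrix (Fin N) (Fin N) ℂ =>
        ((ξ • (1 : Matrix (Fin N) (Fin N) ℂ) - X)⁻¹ * A).trace • B) M ∧
      matrixDivergence (fun X => ((ξ • (1 : Matrix (Fin N) (Fin N) ℂ) - X)⁻¹ * A).trace • B) M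
        = ((ξ • (1 : Matrix (Fin N) (Fin N) ℂ) - M)⁻¹ * A *
            (ξ • (1 : Matrix (Fin N) (Fin N) ℂ) - M)⁻¹ * B).trace := by
  have hres := Matrix.differentiableAt_resolvent hM
  have hφ := Matrix.differentiableAt_trace_mul_const hres A
  refine ⟨hφ.smul_const B, ?_⟩
  rw [matrixDivergence_smul_const hφ, ← Matrix.sum_mul_trace_mul_single_mul]
  refine Finset.sum_congr rfl fun i _ => Finset.sum_congr rfl fun j _ => congrArg (B i j * ·) ?_
  refine (Matrix.fderiv_trace_mul_const_apply hres A _).trans ?_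
  rw [Matrix.fderiv_resolvent_apply hM, Matrix.mul_assoc _ _ A]
end

section
/- Convergence of the Cauchy two-matrix eigenvalue integral: the function (x,y) ↦ Δ(x)² Δ(y)² exp(−(N/T) ∑_{i=1}^N (V₁(x_i)+V₂(y_i))) · ∏_{i,j=1}^N (x_i+y_j)^{−1} is integrable on (0,∞)^N × (0,∞)^N with respect to Lebesgue measure, and its integral Z is strictly positive. -/
/-!
For positive tuples `x, y`, sort both increasingly; then for `i < j` one has
`(x j - x i) (y j - y i) ≤ (x i + y j) (x j + y i)`, and `√(x i y i) ≤ x i + y i` on the diagonal,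
so `|Δ x| |Δ y| ∏ √(x i) ∏ √(y i) ≤ ∏_{i,j} (x i + y j)`. Together with
`|Δ x| ≤ ∏ (1 + |x i|) ^ (N - 1)` this bounds the weight by a product of one-variable functions
`(1 + s) ^ (N - 1) s ^ (-1/2) exp (-(N/T) V s)`, which for `V = -a log + Q` equals
`(1 + s) ^ (N - 1) s ^ ((N/T) a - 1/2) exp (-(N/T) Q s)`. These are integrable on `(0, ∞)`: the power of `s` exceeds `-1` at `0`, and
`Q` has positive leading coefficient, so it grows at least linearly at `∞`.
The integral is positive because the weight is continuous and nonnegative on the open orthant and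
nonzero wherever the coordinates of `x` and of `y` are distinct.
-/

open MeasureTheory Finset Real

theorem Finset.prod_prod_eq_prod_Ioi_mul_prod_diag {M ι : Type*} [CommMonoid M] [LinearOrder ι]
    [Fintype ι] [LocallyFiniteOrderTop ι] (f : ι → ι → M) :
    ∏ i, ∏ j, f i j = (∏ i, ∏ j ∈ Ioi i, f i j * f j i) * ∏ i, f i i := by
  have hrow : ∀ i, ∏ j, f i j = (∏ j ∈ univ.filter (· < i), f i j) * (f i i * ∏ j ∈ Ioi i, f i j) :=
    fun i => by
      rw [← prod_filter_mul_prod_filter_not univ (· < i), mul_prod_Ioi_eq_prod_Ici (f := f i)]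
      congr 2
      ext j; simp
  have hcol : ∏ i, ∏ j ∈ Ioi i, f j i = ∏ i, ∏ j ∈ univ.filter (· < i), f i j :=
    prod_comm' fun i j => by simp
  simp only [hrow, prod_mul_distrib, hcol]
  ac_rfl

theorem Fin.prod_prod_Ioi_mul_eq_prod_pow {M : Type*} [CommMonoid M] {n : ℕ} (a : Fin n → M) :
    ∏ i, ∏ j ∈ Ioi i, a i * a j = ∏ i, a i ^ (n - 1) := by
  have hcol : ∏ i, ∏ j ∈ Ioi i, a j = ∏ j, ∏ _i ∈ Iio j, a j :=
    prod_comm' fun i j => by simp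
  calc ∏ i, ∏ j ∈ Ioi i, a i * a j = (∏ i, a i ^ (n - 1 - i)) * ∏ i, a i ^ (i : ℕ) := by
        simp only [prod_mul_distrib, Finset.prod_const, hcol, Fin.card_Ioi, Fin.card_Iio]
    _ = ∏ i, a i ^ (n - 1) := by
        rw [← prod_mul_distrib]
        refine prod_congr rfl fun i _ => ?_
        rw [← pow_add]
        congr 1
        omega

namespace Matrix

variable {n : ℕ}

theorem det_vandermonde_nonneg_of_monotone {x : Fin n → ℝ} (hx : Monotone x) :
    0 ≤ (vandermonde x).det := by
  rw [det_vandermonde]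
  exact prod_nonneg fun i _ => prod_nonneg fun j hj => sub_nonneg.2 (hx (mem_Ioi.1 hj).le)

theorem abs_det_vandermonde_comp_perm (x : Fin n → ℝ) (σ : Equiv.Perm (Fin n)) :
    |(vandermonde (x ∘ σ)).det| = |(vandermonde x).det| :=
  abs_det_submatrix_equiv_equiv σ (Equiv.refl _) (vandermonde x)

theorem det_vandermonde_mul_det_vandermonde_mul_prod_sqrt_le_of_monotone {x y : Fin n → ℝ}
    (hx : ∀ i, 0 ≤ x i) (hy : ∀ i, 0 ≤ y i) (hxm : Monotone x) (hym : Monotone y) :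
    (vandermonde x).det * (vandermonde y).det * ((∏ i, √(x i)) * ∏ i, √(y i)) ≤
      ∏ i, ∏ j, (x i + y j) := by
  have hpair_nonneg : ∀ i, ∀ j ∈ Ioi i, 0 ≤ (x j - x i) * (y j - y i) := fun i j hj =>
    mul_nonneg (sub_nonneg.2 (hxm (mem_Ioi.1 hj).le)) (sub_nonneg.2 (hym (mem_Ioi.1 hj).le))
  have hpair : ∀ i, ∀ j ∈ Ioi i, (x j - x i) * (y j - y i) ≤ (x i + y j) * (x j + y i) :=
    fun i j hj => by
      have hij := (mem_Ioi.1 hj).le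
      nlinarith [hxm hij, hym hij, hx i, hy i, hx j, hy j]
  have hdiag : ∀ i, √(x i) * √(y i) ≤ x i + y i := fun i => by
    nlinarith [Real.sq_sqrt (hx i), Real.sq_sqrt (hy i), sq_nonneg (√(x i) - √(y i))]
  calc (vandermonde x).det * (vandermonde y).det * ((∏ i, √(x i)) * ∏ i, √(y i))
      = (∏ i, ∏ j ∈ Ioi i, (x j - x i) * (y j - y i)) * ∏ i, √(x i) * √(y i) := by
        simp only [det_vandermonde, prod_mul_distrib]
    _ ≤ (∏ i, ∏ j ∈ Ioi i, (x i + y j) * (x j + y i)) * ∏ i, (x i + y i) := by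
        refine mul_le_mul (prod_le_prod (fun i _ => prod_nonneg (hpair_nonneg i))
          fun i _ => prod_le_prod (hpair_nonneg i) (hpair i))
          (prod_le_prod (fun i _ => by positivity) fun i _ => hdiag i) (by positivity)
          (prod_nonneg fun i _ => prod_nonneg fun j _ => ?_)
        exact mul_nonneg (add_nonneg (hx i) (hy j)) (add_nonneg (hx j) (hy i))
    _ = ∏ i, ∏ j, (x i + y j) := (prod_prod_eq_prod_Ioi_mul_prod_diag _).symm

theorem abs_det_vandermonde_mul_abs_det_vandermonde_mul_prod_sqrt_le {x y : Fin n → ℝ}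
    (hx : ∀ i, 0 ≤ x i) (hy : ∀ i, 0 ≤ y i) :
    |(vandermonde x).det| * |(vandermonde y).det| * ((∏ i, √(x i)) * ∏ i, √(y i)) ≤
      ∏ i, ∏ j, (x i + y j) := by
  have hsorted := det_vandermonde_mul_det_vandermonde_mul_prod_sqrt_le_of_monotone
    (x := x ∘ Tuple.sort x) (y := y ∘ Tuple.sort y)
    (fun _ => hx _) (fun _ => hy _) (Tuple.monotone_sort x) (Tuple.monotone_sort y)
  rw [← abs_of_nonneg (det_vandermonde_nonneg_of_monotone (Tuple.monotone_sort x)),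
    ← abs_of_nonneg (det_vandermonde_nonneg_of_monotone (Tuple.monotone_sort y)),
    abs_det_vandermonde_comp_perm, abs_det_vandermonde_comp_perm] at hsorted
  refine (le_of_eq_of_le ?_ hsorted).trans_eq ?_
  · simp only [Function.comp_apply, Equiv.prod_comp (Tuple.sort x) (fun i => √(x i)),
      Equiv.prod_comp (Tuple.sort y) (fun i => √(y i))]
  · rw [← Equiv.prod_comp (Tuple.sort x) fun i => ∏ j, (x i + y j)]
    exact prod_congr rfl fun i _ => Equiv.prod_comp (Tuple.sort y) fun j => x _ + y j

theorem abs_det_vandermonde_le_prod_one_add_abs_pow (x : Fin n → ℝ) :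
    |(vandermonde x).det| ≤ ∏ i, (1 + |x i|) ^ (n - 1) := by
  rw [det_vandermonde, ← Fin.prod_prod_Ioi_mul_eq_prod_pow, abs_prod]
  refine prod_le_prod (fun _ _ => abs_nonneg _) fun i _ => ?_
  rw [abs_prod]
  refine prod_le_prod (fun _ _ => abs_nonneg _) fun j _ => ?_
  have := abs_sub (x j) (x i)
  nlinarith [abs_nonneg (x i), abs_nonneg (x j)]

theorem sq_det_vandermonde_mul_sq_mul_prod_inv_le {x y : Fin n → ℝ} (hx : ∀ i, 0 < x i)
    (hy : ∀ i, 0 < y i) :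
    (vandermonde x).det ^ 2 * (vandermonde y).det ^ 2 * ∏ i, ∏ j, (x i + y j)⁻¹ ≤
      (∏ i, (1 + x i) ^ (n - 1) / √(x i)) * ∏ i, (1 + y i) ^ (n - 1) / √(y i) := by
  set D := |(vandermonde x).det| * |(vandermonde y).det|
  set R := (∏ i, √(x i)) * ∏ i, √(y i)
  set P := ∏ i, ∏ j, (x i + y j)
  have hR : 0 < R := mul_pos (prod_pos fun i _ => sqrt_pos.2 (hx i))
    (prod_pos fun i _ => sqrt_pos.2 (hy i))
  have hP : 0 < P := prod_pos fun i _ => prod_pos fun j _ => add_pos (hx i) (hy j)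
  have hDRP : D * R ≤ P := abs_det_vandermonde_mul_abs_det_vandermonde_mul_prod_sqrt_le
    (fun i => (hx i).le) (fun i => (hy i).le)
  have hD : D ≤ (∏ i, (1 + x i) ^ (n - 1)) * ∏ i, (1 + y i) ^ (n - 1) := by
    simpa only [abs_of_pos (hx _), abs_of_pos (hy _)] using
      mul_le_mul (abs_det_vandermonde_le_prod_one_add_abs_pow x)
        (abs_det_vandermonde_le_prod_one_add_abs_pow y) (abs_nonneg _) (by positivity)
  calc (vandermonde x).det ^ 2 * (vandermonde y).det ^ 2 * ∏ i, ∏ j, (x i + y j)⁻¹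
      = D * (D / P) := by
        rw [← sq_abs (vandermonde x).det, ← sq_abs (vandermonde y).det]
        simp only [D, P, prod_inv_distrib]
        ring
    _ ≤ D * (1 / R) := by
        refine mul_le_mul_of_nonneg_left ?_ (by positivity)
        rw [div_le_div_iff₀ hP hR]
        linarith
    _ ≤ ((∏ i, (1 + x i) ^ (n - 1)) * ∏ i, (1 + y i) ^ (n - 1)) * (1 / R) := by gcongr
    _ = _ := by simp only [R, prod_div_distrib]; ring

end Matrix

section OneDimensional

open Filter Topology Asymptotics Set

theorem tendsto_sum_mul_pow_div_pow_atTop {d : ℕ} (hd : 1 ≤ d) (t : ℕ → ℝ) :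
    Tendsto (fun s => (∑ k ∈ Icc 1 d, t k * s ^ k) / s ^ d) atTop (𝓝 (t d)) := by
  -- In the variable `u = s⁻¹` the quotient is a polynomial with constant term `t d`.
  have hlim : Tendsto (fun u : ℝ => ∑ k ∈ Icc 1 d, t k * u ^ (d - k)) (𝓝 0) (𝓝 (t d)) := by
    convert (by fun_prop : Continuous fun u : ℝ => ∑ k ∈ Icc 1 d, t k * u ^ (d - k)).tendsto 0
      using 2
    rw [sum_eq_single_of_mem d (mem_Icc.2 ⟨hd, le_rfl⟩) fun k hk hkd => ?_]
    · simp
    · simp [zero_pow (by grind : d - k ≠ 0)]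
  refine (hlim.comp tendsto_inv_atTop_zero).congr' ?_
  filter_upwards [eventually_gt_atTop 0] with s hs
  rw [Function.comp_apply, sum_div]
  refine sum_congr rfl fun k hk => ?_
  rw [← Nat.add_sub_cancel' (mem_Icc.1 hk).2, pow_add, Nat.add_sub_cancel_left, inv_pow,
    mul_div_assoc, div_mul_cancel_left₀ (pow_ne_zero _ hs.ne')]

theorem eventually_mul_le_sum_mul_pow {d : ℕ} (hd : 1 ≤ d) {t : ℕ → ℝ} (ht : 0 < t d) :
    ∀ᶠ s in atTop, t d / 2 * s ≤ ∑ k ∈ Icc 1 d, t k * s ^ k := by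
  filter_upwards [(tendsto_sum_mul_pow_div_pow_atTop hd t).eventually
    (eventually_ge_nhds (half_lt_self ht)), eventually_ge_atTop 1] with s hQ hs
  rw [le_div_iff₀ (by positivity)] at hQ
  calc t d / 2 * s ≤ t d / 2 * s ^ d := by gcongr; exact le_self_pow₀ hs (by omega)
    _ ≤ _ := hQ

theorem isBigO_rpow_mul_one_add_pow_mul_exp_neg_sum (c : ℝ) (m : ℕ) {d : ℕ} (hd : 1 ≤ d)
    {t : ℕ → ℝ} (ht : 0 < t d) :
    (fun s => s ^ c * ((1 + s) ^ m * exp (-∑ k ∈ Icc 1 d, t k * s ^ k))) =O[atTop]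
      fun s => exp (-(t d / 4) * s) := by
  have hdecay := tendsto_rpow_mul_exp_neg_mul_atTop_nhds_zero (c + m) (t d / 4) (by positivity)
  refine IsBigO.of_bound (2 ^ m) ?_
  filter_upwards [eventually_mul_le_sum_mul_pow hd ht, eventually_ge_atTop 1,
    hdecay.eventually (eventually_le_nhds one_pos)] with s hQ hs hsmall
  have hs0 : 0 < s := by linarith
  rw [norm_of_nonneg (by positivity), norm_of_nonneg (by positivity)]
  calc s ^ c * ((1 + s) ^ m * exp (-∑ k ∈ Icc 1 d, t k * s ^ k))
      ≤ s ^ c * ((2 * s) ^ m * exp (-(t d / 2 * s))) := by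
        gcongr
        linarith
    _ = 2 ^ m * (s ^ (c + m) * exp (-(t d / 4) * s)) * exp (-(t d / 4) * s) := by
        have hsplit : exp (-(t d / 2 * s)) = exp (-(t d / 4) * s) * exp (-(t d / 4) * s) := by
          rw [← exp_add]; ring_nf
        rw [rpow_add hs0, rpow_natCast, mul_pow, hsplit]
        ring
    _ ≤ 2 ^ m * exp (-(t d / 4) * s) := by
        gcongr
        exact mul_le_of_le_one_right (by positivity) hsmall

theorem integrableOn_rpow_mul_one_add_pow_mul_exp_neg_sum {c : ℝ} (hc : -1 < c) (m : ℕ) {d : ℕ}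
    (hd : 1 ≤ d) {t : ℕ → ℝ} (ht : 0 < t d) :
    IntegrableOn (fun s => s ^ c * ((1 + s) ^ m * exp (-∑ k ∈ Icc 1 d, t k * s ^ k))) (Ioi 0) := by
  have hcont : Continuous fun s : ℝ => (1 + s) ^ m * exp (-∑ k ∈ Icc 1 d, t k * s ^ k) := by
    fun_prop
  rw [← Ioc_union_Ioi_eq_Ioi zero_le_one]
  refine IntegrableOn.union ?_ ?_
  · have hpow : IntegrableOn (fun s : ℝ => s ^ c) (Icc 0 1) :=
      (integrableOn_Icc_iff_integrableOn_Ioc).2 <|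
        (intervalIntegrable_iff_integrableOn_Ioc_of_le zero_le_one).1
          (intervalIntegral.intervalIntegrable_rpow' hc)
    exact (hpow.mul_continuousOn hcont.continuousOn isCompact_Icc).mono_set Ioc_subset_Icc_self
  · refine integrable_of_isBigO_exp_neg (by positivity) (ContinuousOn.mul (fun s hs => ?_)
      hcont.continuousOn) (isBigO_rpow_mul_one_add_pow_mul_exp_neg_sum c m hd ht)
    exact (continuousAt_rpow_const s c (Or.inl (by linarith [mem_Ici.1 hs]))).continuousWithinAt

noncomputable def logPolyPotential (a : ℝ) (d : ℕ) (t : ℕ → ℝ) (x : ℝ) : ℝ :=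
  -a * log x + ∑ k ∈ Icc 1 d, t k * x ^ k

theorem continuousAt_logPolyPotential (a : ℝ) (d : ℕ) (t : ℕ → ℝ) {x : ℝ} (hx : x ≠ 0) :
    ContinuousAt (logPolyPotential a d t) x := by
  unfold logPolyPotential
  fun_prop (disch := exact hx)

theorem integrableOn_one_add_pow_div_sqrt_mul_exp_neg_logPolyPotential (m : ℕ) {β a : ℝ}
    (hβ : 0 < β) (ha : 0 < a) {d : ℕ} (hd : 1 ≤ d) {t : ℕ → ℝ} (ht : 0 < t d) :
    IntegrableOn (fun s => (1 + s) ^ m / √s * exp (-β * logPolyPotential a d t s)) (Ioi 0) := by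
  refine (integrableOn_rpow_mul_one_add_pow_mul_exp_neg_sum (c := β * a - 1 / 2)
    (t := fun k => β * t k) (by nlinarith) m hd (mul_pos hβ ht)).congr_fun
    (fun s hs => ?_) measurableSet_Ioi
  have hsum : β * ∑ k ∈ Icc 1 d, t k * s ^ k = ∑ k ∈ Icc 1 d, β * t k * s ^ k := by
    simp only [mul_sum, mul_assoc]
  dsimp only [logPolyPotential]
  rw [rpow_sub hs, ← sqrt_eq_rpow, rpow_def_of_pos hs, ← hsum,
    show -β * (-a * log s + ∑ k ∈ Icc 1 d, t k * s ^ k)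
      = log s * (β * a) + -(β * ∑ k ∈ Icc 1 d, t k * s ^ k) by ring, exp_add]
  ring

end OneDimensional

theorem MeasureTheory.IntegrableOn.univ_pi_prod {ι α : Type*} [Fintype ι] [MeasureSpace α]
    [SigmaFinite (volume : Measure α)] {f : ι → α → ℝ} {s : ι → Set α}
    (hf : ∀ i, IntegrableOn (f i) (s i)) :
    IntegrableOn (fun x : ι → α => ∏ i, f i (x i)) (Set.univ.pi s) := by
  rw [IntegrableOn, volume_pi, Measure.restrict_pi_pi]
  exact Integrable.fintype_prod hf

theorem MeasureTheory.IntegrableOn.mul_prod {α β : Type*} [MeasureSpace α] [MeasureSpace β]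
    [SigmaFinite (volume : Measure α)] [SigmaFinite (volume : Measure β)] {f : α → ℝ} {g : β → ℝ}
    {s : Set α} {t : Set β} (hf : IntegrableOn f s) (hg : IntegrableOn g t) :
    IntegrableOn (fun p : α × β => f p.1 * g p.2) (s ×ˢ t) := by
  rw [IntegrableOn, Measure.volume_eq_prod, ← Measure.prod_restrict]
  exact Integrable.mul_prod hf hg

theorem IsOpen.setIntegral_pos_of_continuousOn {X : Type*} [TopologicalSpace X]
    [MeasurableSpace X] [OpensMeasurableSpace X] {μ : Measure X} [μ.IsOpenPosMeasure]
    {f : X → ℝ} {U : Set X} {x : X} (hU : IsOpen U) (hf : ContinuousOn f U)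
    (hfi : IntegrableOn f U μ) (hf_nonneg : ∀ y ∈ U, 0 ≤ f y) (hx : x ∈ U) (hfx : f x ≠ 0) :
    0 < ∫ y in U, f y ∂μ := by
  rw [setIntegral_pos_iff_support_of_nonneg_ae (ae_restrict_of_forall_mem hU.measurableSet
    hf_nonneg) hfi]
  refine ((hf.isOpen_inter_preimage hU isOpen_compl_singleton).measure_pos μ ⟨x, hx, hfx⟩).trans_le
    (measure_mono fun y hy => ⟨hy.2, hy.1⟩)

section CauchyWeight

def positiveOrthant (n : ℕ) : Set ((Fin n → ℝ) × (Fin n → ℝ)) :=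
  {p | (∀ i, 0 < p.1 i) ∧ ∀ j, 0 < p.2 j}

variable {n : ℕ}

theorem positiveOrthant_eq_prod :
    positiveOrthant n = (Set.univ.pi fun _ => Set.Ioi 0) ×ˢ (Set.univ.pi fun _ => Set.Ioi 0) := by
  ext; simp [positiveOrthant]

theorem isOpen_positiveOrthant : IsOpen (positiveOrthant n) :=
  positiveOrthant_eq_prod ▸ (isOpen_set_pi Set.finite_univ fun _ _ => isOpen_Ioi).prod
    (isOpen_set_pi Set.finite_univ fun _ _ => isOpen_Ioi)

noncomputable def cauchyWeight (β : ℝ) (V₁ V₂ : ℝ → ℝ) (p : (Fin n → ℝ) × (Fin n → ℝ)) : ℝ :=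
  (Matrix.vandermonde p.1).det ^ 2 * (Matrix.vandermonde p.2).det ^ 2 *
    exp (-β * ∑ i, (V₁ (p.1 i) + V₂ (p.2 i))) * ∏ i, ∏ j, (p.1 i + p.2 j)⁻¹

variable {β : ℝ} {V₁ V₂ : ℝ → ℝ} {p : (Fin n → ℝ) × (Fin n → ℝ)}

theorem cauchyWeight_nonneg (hp : p ∈ positiveOrthant n) : 0 ≤ cauchyWeight β V₁ V₂ p :=
  mul_nonneg (by positivity)
    (prod_nonneg fun i _ => prod_nonneg fun j _ => inv_nonneg.2 (add_pos (hp.1 i) (hp.2 j)).le)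

theorem cauchyWeight_pos (hp : p ∈ positiveOrthant n) (hx_inj : Function.Injective p.1)
    (hy_inj : Function.Injective p.2) : 0 < cauchyWeight β V₁ V₂ p := by
  have hΔx := Matrix.det_vandermonde_ne_zero_iff.2 hx_inj
  have hΔy := Matrix.det_vandermonde_ne_zero_iff.2 hy_inj
  exact mul_pos (by positivity)
    (prod_pos fun i _ => prod_pos fun j _ => inv_pos.2 (add_pos (hp.1 i) (hp.2 j)))

theorem exists_cauchyWeight_pos : ∃ p ∈ positiveOrthant n, 0 < cauchyWeight β V₁ V₂ p := by
  set x₀ : Fin n → ℝ := fun i => (i : ℝ) + 1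
  have hx₀ : ∀ i, 0 < x₀ i := fun i => by positivity
  have hx₀_inj : Function.Injective x₀ := fun i j h => Fin.ext (by simpa [x₀] using h)
  exact ⟨(x₀, x₀), ⟨hx₀, hx₀⟩, cauchyWeight_pos ⟨hx₀, hx₀⟩ hx₀_inj hx₀_inj⟩

theorem cauchyWeight_le (hp : p ∈ positiveOrthant n) :
    cauchyWeight β V₁ V₂ p ≤
      (∏ i, (1 + p.1 i) ^ (n - 1) / √(p.1 i) * exp (-β * V₁ (p.1 i))) *
        ∏ i, (1 + p.2 i) ^ (n - 1) / √(p.2 i) * exp (-β * V₂ (p.2 i)) := by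
  have hexp : exp (-β * ∑ i, (V₁ (p.1 i) + V₂ (p.2 i))) =
      (∏ i, exp (-β * V₁ (p.1 i))) * ∏ i, exp (-β * V₂ (p.2 i)) := by
    simp only [mul_sum, mul_add, sum_add_distrib, exp_add, exp_sum]
  calc cauchyWeight β V₁ V₂ p
      = ((Matrix.vandermonde p.1).det ^ 2 * (Matrix.vandermonde p.2).det ^ 2 *
          ∏ i, ∏ j, (p.1 i + p.2 j)⁻¹) *
        ((∏ i, exp (-β * V₁ (p.1 i))) * ∏ i, exp (-β * V₂ (p.2 i))) := by
        rw [cauchyWeight, hexp]; ring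
    _ ≤ ((∏ i, (1 + p.1 i) ^ (n - 1) / √(p.1 i)) * ∏ i, (1 + p.2 i) ^ (n - 1) / √(p.2 i)) *
        ((∏ i, exp (-β * V₁ (p.1 i))) * ∏ i, exp (-β * V₂ (p.2 i))) :=
        mul_le_mul_of_nonneg_right (Matrix.sq_det_vandermonde_mul_sq_mul_prod_inv_le hp.1 hp.2)
          (by positivity)
    _ = _ := by simp only [prod_mul_distrib]; ring

theorem continuousAt_cauchyWeight (hp : p ∈ positiveOrthant n)
    (hV₁ : ∀ i, ContinuousAt V₁ (p.1 i)) (hV₂ : ∀ i, ContinuousAt V₂ (p.2 i)) :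
    ContinuousAt (cauchyWeight β V₁ V₂) p := by
  have hadd : ∀ i j, p.1 i + p.2 j ≠ 0 := fun i j => (add_pos (hp.1 i) (hp.2 j)).ne'
  have hV₁' : ∀ i, ContinuousAt (fun q : (Fin n → ℝ) × (Fin n → ℝ) => V₁ (q.1 i)) p :=
    fun i => (hV₁ i).comp (f := fun q : (Fin n → ℝ) × (Fin n → ℝ) => q.1 i) (by fun_prop)
  have hV₂' : ∀ i, ContinuousAt (fun q : (Fin n → ℝ) × (Fin n → ℝ) => V₂ (q.2 i)) p :=
    fun i => (hV₂ i).comp (f := fun q : (Fin n → ℝ) × (Fin n → ℝ) => q.2 i) (by fun_prop)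
  unfold cauchyWeight
  simp only [Matrix.det_vandermonde]
  fun_prop (disch := exact hadd _ _)

variable {a₁ a₂ : ℝ} {d₁ d₂ : ℕ} {t₁ t₂ : ℕ → ℝ}

theorem continuousOn_cauchyWeight_logPolyPotential :
    ContinuousOn (cauchyWeight β (logPolyPotential a₁ d₁ t₁) (logPolyPotential a₂ d₂ t₂))
      (positiveOrthant n) :=
  isOpen_positiveOrthant.continuousOn_iff.2 fun _ hp => continuousAt_cauchyWeight hp
    (fun i => continuousAt_logPolyPotential _ _ _ (hp.1 i).ne')
    (fun i => continuousAt_logPolyPotential _ _ _ (hp.2 i).ne')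

theorem integrableOn_cauchyWeight_logPolyPotential (hβ : 0 < β) (ha₁ : 0 < a₁) (ha₂ : 0 < a₂)
    (hd₁ : 1 ≤ d₁) (hd₂ : 1 ≤ d₂) (ht₁ : 0 < t₁ d₁) (ht₂ : 0 < t₂ d₂) :
    IntegrableOn (cauchyWeight β (logPolyPotential a₁ d₁ t₁) (logPolyPotential a₂ d₂ t₂))
      (positiveOrthant n) := by
  have hmajorant := positiveOrthant_eq_prod (n := n) ▸ IntegrableOn.mul_prod
    (IntegrableOn.univ_pi_prod fun _ =>
      integrableOn_one_add_pow_div_sqrt_mul_exp_neg_logPolyPotential (n - 1) hβ ha₁ hd₁ ht₁)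
    (IntegrableOn.univ_pi_prod fun _ =>
      integrableOn_one_add_pow_div_sqrt_mul_exp_neg_logPolyPotential (n - 1) hβ ha₂ hd₂ ht₂)
  refine hmajorant.mono' (continuousOn_cauchyWeight_logPolyPotential.aestronglyMeasurable
    isOpen_positiveOrthant.measurableSet) (ae_restrict_of_forall_mem
      isOpen_positiveOrthant.measurableSet fun p hp => ?_)
  rw [norm_of_nonneg (cauchyWeight_nonneg hp)]
  exact cauchyWeight_le hp

end CauchyWeight

/-- Convergence of the Cauchy two-matrix eigenvalue integral: the Cauchy eigenvalue weight
`w(x,y) = Δ(x)² Δ(y)² exp(−(N/T) ∑_i (V₁(x_i)+V₂(y_i))) ∏_{i,j} (x_i+y_j)⁻¹`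
is integrable on `(0,∞)^N × (0,∞)^N` with respect to Lebesgue measure, and its integral is
strictly positive. -/
theorem cauchy_model_partition_function_converges
    (N : ℕ) (hN : 1 ≤ N) (T : ℝ) (hT : 0 < T)
    (a₁ a₂ : ℝ) (ha₁ : 0 < a₁) (ha₂ : 0 < a₂)
    (d₁ d₂ : ℕ) (hd₁ : 1 ≤ d₁) (hd₂ : 1 ≤ d₂)
    (t₁ t₂ : ℕ → ℝ) (ht₁ : 0 < t₁ d₁) (ht₂ : 0 < t₂ d₂)
    -- the potentials V_i(x) = −t₋₁^{(i)} ln x + ∑_{k=1}^{d_i} t_k^{(i)} x^k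
    (V₁ V₂ : ℝ → ℝ)
    (hV₁ : ∀ x : ℝ, V₁ x = -a₁ * Real.log x + ∑ k ∈ Finset.Icc 1 d₁, t₁ k * x ^ k)
    (hV₂ : ∀ x : ℝ, V₂ x = -a₂ * Real.log x + ∑ k ∈ Finset.Icc 1 d₂, t₂ k * x ^ k)
    -- the domain (0,∞)^N × (0,∞)^N
    (S : Set ((Fin N → ℝ) × (Fin N → ℝ)))
    (hS : S = {p | (∀ i, 0 < p.1 i) ∧ (∀ j, 0 < p.2 j)})
    -- the Vandermonde product
    (Δ : (Fin N → ℝ) → ℝ)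
    (hΔ : ∀ x : Fin N → ℝ, Δ x = ∏ i : Fin N, ∏ j ∈ Finset.Ioi i, (x j - x i))
    -- the Cauchy eigenvalue weight
    (w : ((Fin N → ℝ) × (Fin N → ℝ)) → ℝ)
    (hw : ∀ p, w p = (Δ p.1) ^ 2 * (Δ p.2) ^ 2 *
        Real.exp (-((N : ℝ) / T) * ∑ i : Fin N, (V₁ (p.1 i) + V₂ (p.2 i))) *
        ∏ i : Fin N, ∏ j : Fin N, (p.1 i + p.2 j)⁻¹) :
    IntegrableOn w S volume ∧ 0 < ∫ p in S, w p := by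
  obtain rfl : V₁ = logPolyPotential a₁ d₁ t₁ := funext hV₁
  obtain rfl : V₂ = logPolyPotential a₂ d₂ t₂ := funext hV₂
  obtain rfl : S = positiveOrthant N := hS
  obtain rfl : w = cauchyWeight ((N : ℝ) / T) (logPolyPotential a₁ d₁ t₁)
      (logPolyPotential a₂ d₂ t₂) :=
    funext fun p => by rw [hw, hΔ, hΔ, cauchyWeight, Matrix.det_vandermonde, Matrix.det_vandermonde]
  have hβ : 0 < (N : ℝ) / T := div_pos (by exact_mod_cast hN) hT
  have hint := integrableOn_cauchyWeight_logPolyPotential (n := N) hβ ha₁ ha₂ hd₁ hd₂ ht₁ ht₂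
  obtain ⟨p, hp, hwp⟩ := exists_cauchyWeight_pos (n := N) (β := (N : ℝ) / T)
    (V₁ := logPolyPotential a₁ d₁ t₁) (V₂ := logPolyPotential a₂ d₂ t₂)
  exact ⟨hint, isOpen_positiveOrthant.setIntegral_pos_of_continuousOn
    continuousOn_cauchyWeight_logPolyPotential hint (fun _ hq => cauchyWeight_nonneg hq) hp hwp.ne'⟩
end
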